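/- arXiv:2406.10161 — 9 statements merged into one kernel-verified Lean document; each statement's English description precedes it below -/
import Mathlib

section
/- There is no program solving the TwoHalt problem: there is no Turing machine T that, given a pair of indices (i,j) of Turing machines, outputs 1 if T_i halts on input i and T_j loops on input j; outputs 2 if T_i loops on input i and T_j halts on input j; halts and outputs 1 or 2 if both loop; and may behave arbitrarily (output 1 or 2 or loop) if both halt. -/
/-!
Suppose the code `C` solved TwoHalt. By the double recursion theorem there are codes `a`, `b`
such that `T_a` halts exactly when `C` answers `2` on `(a, b)` and `T_b` halts exactly when
`C` answers `1` on `(a, b)`. Whatever `C` does on `(a, b)` then contradicts its specification: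
an answer `1` makes `T_b(b)` halt, an answer `2` makes `T_a(a)` halt, and no answer makes both
loop.
-/

open Nat.Partrec (Code)

/-- `T_i(i)` halts, where `(T_i)` is the standard enumeration of Turing machines
(partial recursive functions) via `Nat.Partrec.Code`. -/
def selfHalts (i : ℕ) : Prop := ((Denumerable.ofNat Code i).eval i).Dom

open Nat.Partrec.Code

theorem Partrec.exists_dom_iff_mem {α σ : Type*} [Primcodable α] [Primcodable σ]
    [DecidableEq σ] {g : α →. σ} (hg : Partrec g) (m : σ) :
    ∃ h : α →. ℕ, Partrec h ∧ ∀ a, (h a).Dom ↔ m ∈ g a := by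
  refine ⟨fun a => (g a).bind fun v => _root_.cond (decide (v = m)) (Part.some 0) Part.none,
    hg.bind (Partrec.cond (Primrec.eq.comp Primrec.snd (Primrec.const m)).decide.to_comp
      (Partrec.const' _) Partrec.none), fun a => ?_⟩
  simp only [Part.bind_dom]
  constructor
  · rintro ⟨hv, hdom⟩
    by_cases hvm : (g a).get hv = m
    · exact hvm ▸ Part.get_mem hv
    · simp [hvm] at hdom
  · intro hm
    exact ⟨Part.dom_iff_mem.2 ⟨m, hm⟩, by simp [Part.get_eq_of_mem hm]⟩

/-- Smullyan's double recursion theorem. -/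
theorem Nat.Partrec.Code.exists_eval_eq_pair {f₁ f₂ : Code × Code → ℕ →. ℕ}
    (hf₁ : Partrec₂ f₁) (hf₂ : Partrec₂ f₂) :
    ∃ c₁ c₂ : Code, c₁.eval = f₁ (c₁, c₂) ∧ c₂.eval = f₂ (c₁, c₂) := by
  let f : Code → ℕ →. ℕ := fun e y =>
    cond (decide (y.unpair.1 = 0)) (f₁ (e.curry 0, e.curry 1) y.unpair.2)
      (f₂ (e.curry 0, e.curry 1) y.unpair.2)
  have hcurry : Computable fun p : Code × ℕ => (p.1.curry 0, p.1.curry 1) :=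
    ((primrec₂_curry.comp Primrec.fst (_root_.Primrec.const 0)).pair
      (primrec₂_curry.comp Primrec.fst (_root_.Primrec.const 1))).to_comp
  have harg : Computable fun p : Code × ℕ => p.2.unpair.2 :=
    (Primrec.snd.comp (Primrec.unpair.comp Primrec.snd)).to_comp
  have hf : Partrec₂ f :=
    Partrec.cond
      (Primrec.eq.comp (Primrec.fst.comp (Primrec.unpair.comp Primrec.snd))
        (_root_.Primrec.const 0)).decide.to_comp
      (hf₁.comp hcurry harg) (hf₂.comp hcurry harg)
  obtain ⟨e, he⟩ := fixed_point₂ hf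
  refine ⟨e.curry 0, e.curry 1, ?_, ?_⟩ <;> funext x <;> simp [eval_curry, he, f]

theorem selfHalts_encode (c : Code) :
    selfHalts (Encodable.encode c) ↔ (c.eval (Encodable.encode c)).Dom := by
  rw [selfHalts, Denumerable.ofNat_encode]

theorem exists_selfHalts_iff_mem_pair {g : ℕ →. ℕ} (hg : Partrec g) (m n : ℕ) :
    ∃ i j, (selfHalts i ↔ m ∈ g (Nat.pair i j)) ∧
      (selfHalts j ↔ n ∈ g (Nat.pair i j)) := by
  have hg' : Partrec fun p : Code × Code =>
      g (Nat.pair (Encodable.encode p.1) (Encodable.encode p.2)) :=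
    hg.comp (Primrec₂.natPair.comp (Primrec.encode.comp Primrec.fst)
      (Primrec.encode.comp Primrec.snd)).to_comp
  obtain ⟨h₁, hh₁, hdom₁⟩ := hg'.exists_dom_iff_mem m
  obtain ⟨h₂, hh₂, hdom₂⟩ := hg'.exists_dom_iff_mem n
  obtain ⟨a, b, ha, hb⟩ :=
    exists_eval_eq_pair (f₁ := fun p _ => h₁ p) (f₂ := fun p _ => h₂ p)
      (hh₁.comp Computable.fst) (hh₂.comp Computable.fst)
  refine ⟨Encodable.encode a, Encodable.encode b, ?_, ?_⟩
  · rw [selfHalts_encode, ha, hdom₁]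
  · rw [selfHalts_encode, hb, hdom₂]

/-- There is no program solving the TwoHalt problem: no Turing machine `c` that, on
input the pair `(i,j)`, outputs `1` if `T_i(i)` halts and `T_j(j)` loops, outputs `2`
if `T_i(i)` loops and `T_j(j)` halts, halts with output `1` or `2` if both loop, and
may behave arbitrarily if both halt. -/
theorem twoHalt_undecidable :
    ¬ ∃ c : Code, ∀ i j : ℕ,
      (selfHalts i ∧ ¬ selfHalts j → c.eval (Nat.pair i j) = Part.some 1) ∧
      (¬ selfHalts i ∧ selfHalts j → c.eval (Nat.pair i j) = Part.some 2) ∧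
      (¬ selfHalts i ∧ ¬ selfHalts j →
        (c.eval (Nat.pair i j)).Dom ∧ ∀ v ∈ c.eval (Nat.pair i j), v = 1 ∨ v = 2) := by
  rintro ⟨C, hC⟩
  obtain ⟨i, j, hi, hj⟩ := exists_selfHalts_iff_mem_pair (eval_part.comp (Computable.const C)
    Computable.id) 2 1
  obtain ⟨h₁, h₂, h₃⟩ := hC i j
  by_cases hsi : selfHalts i <;> by_cases hsj : selfHalts j
  · exact absurd (Part.mem_unique (hj.1 hsj) (hi.1 hsi)) (by decide)
  · simpa [h₁ ⟨hsi, hsj⟩] using hi.1 hsi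
  · simpa [h₂ ⟨hsi, hsj⟩] using hj.1 hsj
  · obtain ⟨hdom, hv⟩ := h₃ ⟨hsi, hsj⟩
    obtain ⟨v, hvC⟩ := Part.dom_iff_mem.1 hdom
    rcases hv v hvC with rfl | rfl
    exacts [hsj (hj.2 hvC), hsi (hi.2 hvC)]
end

section
/- The hypothesis class H = { h_a : ℕ → {0,1} | h_a(2i) = 1 iff i ≤ a, and h_a(2i+1) = 1 for all i } indexed by a ∈ ℕ ∪ {∞} has VC dimension exactly 1. -/
/-- A class of Boolean-valued hypotheses `H` shatters a finite set `S` if every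
labelling of `S` is realized by some member of `H`. -/
def Shatters {X : Type*} (H : Set (X → Bool)) (S : Finset X) : Prop :=
  ∀ f : X → Bool, ∃ h ∈ H, ∀ x ∈ S, h x = f x

/-- The class `{h_a : a ∈ ℕ ∪ {∞}}` with `h_a(2i) = 1` iff `i ≤ a` and
`h_a(2i+1) = 1` for all `i`. -/
def Hthr : Set (ℕ → Bool) :=
  {h | ∃ a : ℕ∞, ∀ i : ℕ, h (2 * i) = decide ((i : ℕ∞) ≤ a) ∧ h (2 * i + 1) = true}

/-- The explicit hypothesis with threshold `a`. -/
def hfun (a : ℕ∞) : ℕ → Bool :=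
  fun n => if n % 2 = 0 then decide ((n / 2 : ℕ) ≤ a) else true

lemma hfun_mem (a : ℕ∞) : hfun a ∈ Hthr := by
  refine ⟨a, fun i => ?_⟩
  constructor
  · simp [hfun, Nat.mul_div_cancel_left _ (by norm_num : 0 < 2)]
  · simp [hfun, Nat.mul_add_mod]

/-- The class of even-thresholds-with-odd-constant-one has VC dimension exactly 1. -/
theorem Hthr_vc_eq_one :
    (∃ S : Finset ℕ, S.card = 1 ∧ Shatters Hthr S) ∧
    (∀ S : Finset ℕ, Shatters Hthr S → S.card ≤ 1) := by
  constructor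
  · refine ⟨{2}, rfl, fun f => ?_⟩
    by_cases hf : f 2 = true
    · refine ⟨hfun ⊤, hfun_mem ⊤, fun x hx => ?_⟩
      simp only [Finset.mem_singleton] at hx
      subst hx
      simp [hfun, hf]
    · refine ⟨hfun 0, hfun_mem 0, fun x hx => ?_⟩
      simp only [Finset.mem_singleton] at hx
      subst hx
      simp only [Bool.not_eq_true] at hf
      rw [hf]
      simp [hfun]
  · intro S hS
    by_contra hcard
    push_neg at hcard
    obtain ⟨x, hx, y, hy, hxy⟩ := Finset.one_lt_card.mp hcard
    -- every element of S is even
    have heven : ∀ z ∈ S, z % 2 = 0 := by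
      intro z hz
      by_contra hodd
      obtain ⟨h, ⟨a, ha⟩, hmatch⟩ := hS (fun _ => false)
      have h2 : z % 2 = 1 := by omega
      have hz' : z = 2 * (z / 2) + 1 := by omega
      have := (ha (z / 2)).2
      rw [← hz'] at this
      rw [hmatch z hz] at this
      simp at this
    obtain ⟨i, hi⟩ : ∃ i, x = 2 * i := ⟨x / 2, by have := heven x hx; omega⟩
    obtain ⟨j, hj⟩ : ∃ j, y = 2 * j := ⟨y / 2, by have := heven y hy; omega⟩
    have hij : i ≠ j := by omega
    -- wlog i < j, handle both orders symmetrically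
    have key : ∀ u v : ℕ, u < v → ∀ xu xv : ℕ, xu = 2 * u → xv = 2 * v →
        xu ∈ S → xv ∈ S → False := by
      intro u v huv xu xv hxu hxv hxuS hxvS
      obtain ⟨h, ⟨a, ha⟩, hmatch⟩ := hS (fun n => decide (n = xv))
      have h1 : h xu = false := by
        rw [hmatch xu hxuS]; simp; omega
      have h2 : h xv = true := by
        rw [hmatch xv hxvS]; simp
      rw [hxu] at h1; rw [hxv] at h2
      rw [(ha u).1] at h1; rw [(ha v).1] at h2
      simp at h1 h2
      exact absurd (le_trans (by exact_mod_cast huv.le : (u:ℕ∞) ≤ v) h2) (not_le.mpr h1)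
    rcases Nat.lt_or_ge i j with hlt | hge
    · exact key i j hlt x y hi hj hx hy
    · exact key j i (by omega) y x hj hi hy hx
end

section
/- Robust No-Free-Lunch: Let X be a domain, U : X → Set(X) a perturbation type with x ∈ U(x) for all x, and A any learner mapping samples of size m to hypotheses X → {0,1}. Suppose there exist 4m points z₁⁰,z₁¹,...,z_{2m}⁰,z_{2m}¹ such that for each i there is x_i ∈ U(z_i⁰) ∩ U(z_i¹), and for i ≠ j the sets U(z_i¹) and U(z_j⁰) are disjoint. Then there exists a distribution D over X × {0,1} and a function f : X → {0,1} with robust risk R_U(f;D) = 0, such that with probability at least 1/7 over samples S ~ D^m, the robust risk R_U(A(S);D) ≥ 1/8. -/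
/-- The robust risk of hypothesis `h` under the uniform distribution on the `n`
labelled points `(z i (y i), y i)`: the fraction of points on which some
perturbation of the point is misclassified. -/
noncomputable def robRisk {X : Type*} (U : X → Set X) (n : ℕ)
    (z : Fin n → Bool → X) (y : Fin n → Bool) (h : X → Bool) : ℝ :=
  (Nat.card {i : Fin n // ∃ z' ∈ U (z i (y i)), h z' ≠ y i} : ℝ) / n

open Finset

/-- Robust No-Free-Lunch theorem: given a perturbation type `U` (with `x ∈ U x`), a
learner `A` taking samples of size `m`, and `4m` points `z i false, z i true`
(`i < 2m`) such that each pair has a common perturbation `x i` and `U (z i true)`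
is disjoint from `U (z j false)` for `i ≠ j`, there is a robustly realizable
uniform distribution — given by a labelling `y`, with a hypothesis `f` of robust
risk `0` — on which, with probability at least `1/7` over i.i.d. samples of size
`m` (equivalently, over the `(2m)^m` equally likely index sequences), the learner's
output has robust risk at least `1/8`. -/
theorem robust_no_free_lunch {X : Type*} (U : X → Set X) (hU : ∀ x, x ∈ U x)
    (m : ℕ) (hm : 0 < m) (A : (Fin m → X × Bool) → X → Bool)
    (z : Fin (2 * m) → Bool → X) (x : Fin (2 * m) → X)
    (hx : ∀ i, x i ∈ U (z i false) ∩ U (z i true))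
    (hdisj : ∀ i j, i ≠ j → Disjoint (U (z i true)) (U (z j false))) :
    ∃ y : Fin (2 * m) → Bool,
      (∃ f : X → Bool, ∀ i, ∀ z' ∈ U (z i (y i)), f z' = y i) ∧
      (1 : ℝ) / 7 ≤
        (Nat.card {S : Fin m → Fin (2 * m) //
            (1 : ℝ) / 8 ≤ robRisk U (2 * m) z y
              (A fun k => (z (S k) (y (S k)), y (S k)))} : ℝ) / ((2 * m) ^ m : ℕ) := by
  classical
  -- abbreviations
  set samp : (Fin (2 * m) → Bool) → (Fin m → Fin (2 * m)) → (Fin m → X × Bool) :=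
    fun y S k => (z (S k) (y (S k)), y (S k)) with hsamp
  set P : (Fin (2 * m) → Bool) → (Fin m → Fin (2 * m)) → Fin (2 * m) → Prop :=
    fun y S i => ∃ z' ∈ U (z i (y i)), A (samp y S) z' ≠ y i with hPdef
  set C : (Fin (2 * m) → Bool) → (Fin m → Fin (2 * m)) → ℕ :=
    fun y S => (univ.filter (fun i => P y S i)).card with hCdef
  set K := Fintype.card (Fin (2 * m) → Bool) with hK
  set N := Fintype.card (Fin m → Fin (2 * m)) with hN
  have hNval : N = (2 * m) ^ m := by simp [hN]
  -- pointwise pairing bound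
  have pair : ∀ (S : Fin m → Fin (2 * m)) (i : Fin (2 * m)), (∀ k, S k ≠ i) →
      ∀ y : Fin (2 * m) → Bool,
        1 ≤ (if P y S i then 1 else 0) +
          (if P (Function.update y i (!y i)) S i then 1 else 0) := by
    intro S i hi y
    by_cases hy : P y S i
    · simp [hy]
    · have hmem : x i ∈ U (z i (y i)) := by
        cases hyi : y i
        · exact (hx i).1
        · exact (hx i).2
      have hxy : A (samp y S) (x i) = y i := by
        by_contra hne
        exact hy ⟨x i, hmem, hne⟩
      have hsampeq : samp (Function.update y i (!y i)) S = samp y S := by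
        funext k
        simp [hsamp, Function.update_of_ne (hi k)]
      have hP' : P (Function.update y i (!y i)) S i := by
        refine ⟨x i, ?_, ?_⟩
        · rw [Function.update_self]
          cases hyi : y i
          · simpa [hyi] using (hx i).2
          · simpa [hyi] using (hx i).1
        · rw [hsampeq, Function.update_self, hxy]
          cases y i <;> simp
      simp [hy, hP']
  -- per-sample averaged bound
  have sumS : ∀ S : Fin m → Fin (2 * m),
      m * K ≤ ∑ y : Fin (2 * m) → Bool, 2 * C y S := by
    intro S
    set out := univ.filter (fun i : Fin (2 * m) => ∀ k, S k ≠ i) with hout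
    have hcard : m ≤ out.card := by
      have hsub : univ.filter (fun i : Fin (2 * m) => ¬ ∀ k, S k ≠ i) ⊆ univ.image S := by
        intro i hi
        simp only [mem_filter, not_forall, not_not] at hi
        obtain ⟨k, hk⟩ := hi.2
        exact mem_image.mpr ⟨k, mem_univ k, hk⟩
      have h1 : (univ.filter (fun i : Fin (2 * m) => ¬ ∀ k, S k ≠ i)).card ≤ m := by
        calc (univ.filter (fun i : Fin (2 * m) => ¬ ∀ k, S k ≠ i)).card
            ≤ (univ.image S).card := card_le_card hsub
          _ ≤ (univ : Finset (Fin m)).card := card_image_le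
          _ = m := by simp
      have h2 := card_filter_add_card_filter_not
        (s := (univ : Finset (Fin (2 * m)))) (p := fun i => ∀ k, S k ≠ i)
      have h3 : (univ : Finset (Fin (2 * m))).card = 2 * m := by simp
      rw [← hout] at h2
      omega
    have hper : ∀ i ∈ out,
        K ≤ ∑ y : Fin (2 * m) → Bool, 2 * (if P y S i then 1 else 0) := by
      intro i hi
      have hi' : ∀ k, S k ≠ i := (mem_filter.mp hi).2
      have hinv : Function.Involutive
          (fun y : Fin (2 * m) → Bool => Function.update y i (!y i)) := by
        intro y
        simp [Function.update_idem, Function.update_self, Function.update_eq_self]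
      have hre : (∑ y : Fin (2 * m) → Bool,
            (if P (Function.update y i (!y i)) S i then 1 else 0))
          = ∑ y : Fin (2 * m) → Bool, (if P y S i then 1 else 0) :=
        Fintype.sum_bijective _ hinv.bijective _ _ (fun y => rfl)
      calc K = ∑ _y : Fin (2 * m) → Bool, 1 := by simp [hK]
        _ ≤ ∑ y : Fin (2 * m) → Bool,
            ((if P y S i then 1 else 0) +
              (if P (Function.update y i (!y i)) S i then 1 else 0)) :=
          sum_le_sum (fun y _ => pair S i hi' y)
        _ = ∑ y : Fin (2 * m) → Bool, 2 * (if P y S i then 1 else 0) := by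
          rw [sum_add_distrib, hre, ← two_mul, mul_sum]
    calc m * K ≤ out.card * K := Nat.mul_le_mul_right _ hcard
      _ = ∑ _i ∈ out, K := by rw [sum_const, smul_eq_mul]
      _ ≤ ∑ i ∈ out, ∑ y : Fin (2 * m) → Bool, 2 * (if P y S i then 1 else 0) :=
        sum_le_sum hper
      _ = ∑ y : Fin (2 * m) → Bool, ∑ i ∈ out, 2 * (if P y S i then 1 else 0) :=
        sum_comm
      _ ≤ ∑ y : Fin (2 * m) → Bool, 2 * C y S := by
        refine sum_le_sum (fun y _ => ?_)
        rw [← mul_sum]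
        refine Nat.mul_le_mul_left _ ?_
        calc (∑ i ∈ out, if P y S i then 1 else 0)
            ≤ ∑ i : Fin (2 * m), if P y S i then 1 else 0 :=
              sum_le_sum_of_subset (filter_subset _ _)
          _ = C y S := (card_filter _ _).symm
  -- choose a good labelling y
  have htotal : (∑ _y : Fin (2 * m) → Bool, m * N)
      ≤ ∑ y : Fin (2 * m) → Bool, ∑ S : Fin m → Fin (2 * m), 2 * C y S := by
    have e1 : (∑ _y : Fin (2 * m) → Bool, m * N) = K * (m * N) := by
      rw [sum_const, card_univ, smul_eq_mul, ← hK]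
    have e2 : (∑ _S : Fin m → Fin (2 * m), m * K) = N * (m * K) := by
      rw [sum_const, card_univ, smul_eq_mul, ← hN]
    have e3 : (∑ _S : Fin m → Fin (2 * m), m * K)
        ≤ ∑ S : Fin m → Fin (2 * m), ∑ y : Fin (2 * m) → Bool, 2 * C y S :=
      sum_le_sum (fun S _ => sumS S)
    have e4 : (∑ _y : Fin (2 * m) → Bool, m * N) = ∑ _S : Fin m → Fin (2 * m), m * K := by
      rw [e1, e2]; ring
    rw [Finset.sum_comm, e4]
    exact e3
  obtain ⟨y, -, hy⟩ := Finset.exists_le_of_sum_le Finset.univ_nonempty htotal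
  refine ⟨y, ⟨fun w => decide (∃ j, y j = true ∧ w ∈ U (z j true)), ?_⟩, ?_⟩
  · -- realizability
    intro i z' hz'
    cases hyi : y i
    · rw [hyi] at hz'
      simp only [decide_eq_false_iff_not]
      rintro ⟨j, hj, hzj⟩
      have hne : j ≠ i := fun h => by rw [h, hyi] at hj; exact Bool.false_ne_true hj
      exact Set.disjoint_left.mp (hdisj j i hne) hzj hz'
    · rw [hyi] at hz'
      simp only [decide_eq_true_eq]
      exact ⟨i, hyi, hz'⟩
  · -- the probability bound
    have hrob : ∀ S : Fin m → Fin (2 * m),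
        robRisk U (2 * m) z y (A fun k => (z (S k) (y (S k)), y (S k)))
          = (C y S : ℝ) / (2 * m) := by
      intro S
      have : Nat.card {i : Fin (2 * m) // ∃ z' ∈ U (z i (y i)),
          A (fun k => (z (S k) (y (S k)), y (S k))) z' ≠ y i} = C y S := by
        rw [Nat.card_eq_fintype_card, Fintype.card_subtype]
      rw [robRisk, this]
      push_cast
      ring
    set B := univ.filter (fun S : Fin m → Fin (2 * m) =>
      (1 : ℝ) / 8 ≤ robRisk U (2 * m) z y
        (A fun k => (z (S k) (y (S k)), y (S k)))) with hB
    have hcardB : (Nat.card {S : Fin m → Fin (2 * m) //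
        (1 : ℝ) / 8 ≤ robRisk U (2 * m) z y
          (A fun k => (z (S k) (y (S k)), y (S k)))}) = B.card := by
      rw [Nat.card_eq_fintype_card, Fintype.card_subtype]
    have hmR : (0 : ℝ) < m := by exact_mod_cast hm
    have hNpos : (0 : ℝ) < N := by
      rw [hNval]; positivity
    -- sum bounds
    have hCle : ∀ S : Fin m → Fin (2 * m), (C y S : ℝ) ≤ 2 * m := by
      intro S
      have : C y S ≤ 2 * m := by
        calc C y S ≤ (univ : Finset (Fin (2 * m))).card := card_filter_le _ _
          _ = 2 * m := by simp
      exact_mod_cast this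
    have hsplit := Finset.sum_filter_add_sum_filter_not univ
      (fun S : Fin m → Fin (2 * m) =>
        (1 : ℝ) / 8 ≤ robRisk U (2 * m) z y
          (A fun k => (z (S k) (y (S k)), y (S k))))
      (fun S => (C y S : ℝ))
    have hbound1 : (∑ S ∈ B, (C y S : ℝ)) ≤ B.card * (2 * m) := by
      calc (∑ S ∈ B, (C y S : ℝ)) ≤ ∑ _S ∈ B, (2 * m : ℝ) :=
          sum_le_sum (fun S _ => hCle S)
        _ = B.card * (2 * m) := by rw [sum_const, nsmul_eq_mul]
    have hbound2 : (∑ S ∈ univ.filter (fun S : Fin m → Fin (2 * m) =>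
        ¬ ((1 : ℝ) / 8 ≤ robRisk U (2 * m) z y
          (A fun k => (z (S k) (y (S k)), y (S k))))), (C y S : ℝ))
        ≤ (N - B.card : ℝ) * (m / 4) := by
      have hcard2 : (univ.filter (fun S : Fin m → Fin (2 * m) =>
          ¬ ((1 : ℝ) / 8 ≤ robRisk U (2 * m) z y
            (A fun k => (z (S k) (y (S k)), y (S k)))))).card = N - B.card := by
        have h2 := card_filter_add_card_filter_not
          (s := (univ : Finset (Fin m → Fin (2 * m))))
          (p := fun S => (1 : ℝ) / 8 ≤ robRisk U (2 * m) z y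
            (A fun k => (z (S k) (y (S k)), y (S k))))
        have h3 : (univ : Finset (Fin m → Fin (2 * m))).card = N := by
          rw [hN, card_univ]
        rw [hB]
        exact Nat.eq_sub_of_add_eq' (h3 ▸ h2)
      calc (∑ S ∈ univ.filter (fun S : Fin m → Fin (2 * m) =>
          ¬ ((1 : ℝ) / 8 ≤ robRisk U (2 * m) z y
            (A fun k => (z (S k) (y (S k)), y (S k))))), (C y S : ℝ))
          ≤ ∑ _S ∈ univ.filter (fun S : Fin m → Fin (2 * m) =>
            ¬ ((1 : ℝ) / 8 ≤ robRisk U (2 * m) z y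
              (A fun k => (z (S k) (y (S k)), y (S k))))), ((m : ℝ) / 4) := by
            refine sum_le_sum (fun S hS => ?_)
            have hS' := (mem_filter.mp hS).2
            rw [hrob S] at hS'
            push_neg at hS'
            have h2m : (0 : ℝ) < 2 * m := by positivity
            rw [div_lt_div_iff₀ h2m (by norm_num : (0:ℝ) < 8)] at hS'
            nlinarith
        _ = ((univ.filter (fun S : Fin m → Fin (2 * m) =>
            ¬ ((1 : ℝ) / 8 ≤ robRisk U (2 * m) z y
              (A fun k => (z (S k) (y (S k)), y (S k)))))).card : ℝ) * (m / 4) := by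
            rw [sum_const, nsmul_eq_mul]
        _ ≤ (N - B.card : ℝ) * (m / 4) := by
            have hBle : B.card ≤ N := by
              rw [hN, ← card_univ]; exact card_filter_le _ _
            rw [hcard2, Nat.cast_sub hBle]
    have hfin : (N : ℝ) ≤ 7 * B.card := by
      have hy' : (m : ℝ) * N ≤ ∑ S : Fin m → Fin (2 * m), 2 * (C y S : ℝ) := by
        exact_mod_cast hy
      have hmain : (m : ℝ) * N ≤ 2 * ((B.card : ℝ) * (2 * m) + (N - B.card : ℝ) * (m / 4)) := by
        calc (m : ℝ) * N ≤ ∑ S : Fin m → Fin (2 * m), 2 * (C y S : ℝ) := hy'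
          _ = 2 * ∑ S : Fin m → Fin (2 * m), (C y S : ℝ) := by rw [mul_sum]
          _ = 2 * ((∑ S ∈ B, (C y S : ℝ)) +
              ∑ S ∈ univ.filter (fun S : Fin m → Fin (2 * m) =>
                ¬ ((1 : ℝ) / 8 ≤ robRisk U (2 * m) z y
                  (A fun k => (z (S k) (y (S k)), y (S k))))), (C y S : ℝ)) := by
            rw [hsplit]
          _ ≤ 2 * ((B.card : ℝ) * (2 * m) + (N - B.card : ℝ) * (m / 4)) := by
            have := add_le_add hbound1 hbound2
            linarith
      nlinarith [hmain, hmR]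
    rw [hcardB]
    have hNcast : (((2 * m) ^ m : ℕ) : ℝ) = (N : ℝ) := by rw [hNval]
    rw [hNcast, le_div_iff₀ hNpos]
    linarith [hfin]
end

section
/- In the setting of the robust no-free-lunch construction, for any learner A and any labelling y ∈ {0,1}^{2m} of pairs (z_i⁰, z_i¹) with shatterable witnesses x_i ∈ U(z_i⁰) ∩ U(z_i¹), the expected robust risk of A under the uniform distribution D_y on {(z_i^{y_i}, y_i)} is lower bounded by the expected 0-1 error of A's output on the witness points: E_{S~D_y^m}[R_U(A(S); D_y)] ≥ E_{S~D_y^m}[(1/2m) Σ_i 1[A(S)(x_i) ≠ y_i]]. -/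
/-- The 0-1 error of `h` on the witness points `x i` with respect to labelling `y`. -/
noncomputable def witnessErr {X : Type*} (n : ℕ) (x : Fin n → X)
    (y : Fin n → Bool) (h : X → Bool) : ℝ :=
  (Nat.card {i : Fin n // h (x i) ≠ y i} : ℝ) / n


lemma witnessErr_le_robRisk {X : Type*} (U : X → Set X) (n : ℕ)
    (z : Fin n → Bool → X) (x : Fin n → X)
    (hx : ∀ i, x i ∈ U (z i false) ∩ U (z i true))
    (y : Fin n → Bool) (h : X → Bool) :
    witnessErr n x y h ≤ robRisk U n z y h := by
  unfold witnessErr robRisk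
  gcongr
  exact_mod_cast Nat.card_le_card_of_injective
    (fun p : {i : Fin n // h (x i) ≠ y i} =>
      (⟨p.1, x p.1, by
        cases hy : y p.1
        · exact (hx p.1).1
        · exact (hx p.1).2, p.2⟩ :
        {i : Fin n // ∃ z' ∈ U (z i (y i)), h z' ≠ y i}))
    (fun a b hab => by
      have := congrArg Subtype.val hab
      exact Subtype.ext this)

/-- In the robust no-free-lunch construction, for any learner `A` and any labelling
`y` of the pairs `(z i false, z i true)` with shatterable witnesses
`x i ∈ U (z i false) ∩ U (z i true)`, the expected robust risk of `A` under the
uniform distribution on `{(z i (y i), y i)}` (expectation = average over all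
`(2m)^m` index sequences) is lower bounded by the expected 0-1 error of `A`'s output
on the witness points. -/
theorem expected_robust_risk_ge_witness_error {X : Type*} (U : X → Set X)
    (hU : ∀ x, x ∈ U x) (m : ℕ) (hm : 0 < m)
    (A : (Fin m → X × Bool) → X → Bool)
    (z : Fin (2 * m) → Bool → X) (x : Fin (2 * m) → X)
    (hx : ∀ i, x i ∈ U (z i false) ∩ U (z i true))
    (y : Fin (2 * m) → Bool) :
    (∑ S : Fin m → Fin (2 * m),
        witnessErr (2 * m) x y (A fun k => (z (S k) (y (S k)), y (S k)))) /
        ((2 * m) ^ m : ℕ) ≤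
      (∑ S : Fin m → Fin (2 * m),
        robRisk U (2 * m) z y (A fun k => (z (S k) (y (S k)), y (S k)))) /
        ((2 * m) ^ m : ℕ) := by
  gcongr with S _
  exact witnessErr_le_robRisk U _ z x hx y _
end

section
/- For any m ≥ 1 and any m functions f₁,...,f_T with T = 2^{2m} labellings of a 2m-point set, there exists a labelling index j such that the average over all (2m)^m sequences S of length m from the support of D_j of the quantity (1/2m) Σ_{i=1}^{2m} 1[A(S)(x_i) ≠ y_i^{(j)}] is at least 1/8, for any fixed learner A mapping length-m sequences to functions on {x₁,...,x_{2m}}. -/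
/-!
Fix a sample `S` of `m` indices. At least `m` of the `2m` points are not hit by `S`, and at
such a point `i` flipping the label `y i` does not change what the learner sees, so the learner
errs at `i` for exactly half of all labellings. Hence the average over labellings of the number
of errors is at least `m / 2` for every `S`, and averaging over `S` as well, some labelling has
mean error rate at least `1/4`.
-/

open Finset Function

section
variable {ι κ : Type*} [Fintype ι] [DecidableEq ι]

theorem two_mul_card_filter_ne_apply_eq_two_pow (g : (ι → Bool) → Bool) (i : ι)
    (hg : ∀ y b, g (update y i b) = g y) :
    2 * #{y | g y ≠ y i} = 2 ^ Fintype.card ι := by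
  let flip : (ι → Bool) ≃ (ι → Bool) :=
    (show Involutive fun y : ι → Bool => update y i (!y i) from fun y => by
      ext j; by_cases hj : j = i <;> simp [hj]).toPerm
  have hflip : #{y | g y ≠ y i} = #{y | ¬ g y ≠ y i} :=
    card_equiv flip fun y => by simp [flip, hg, Bool.eq_not]
  rw [two_mul]
  nth_rw 2 [hflip]
  rw [card_filter_add_card_filter_not, card_univ, Fintype.card_fun, Fintype.card_bool]

variable [Fintype κ]

theorem sub_card_mul_two_pow_le_two_mul_sum_card_filter_ne (S : κ → ι)
    (g : (κ → Bool) → ι → Bool) :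
    (Fintype.card ι - Fintype.card κ) * 2 ^ Fintype.card ι ≤
      2 * ∑ y : ι → Bool, #{i | g (y ∘ S) i ≠ y i} := by
  have hunseen : Fintype.card ι - Fintype.card κ ≤ #(univ.image S)ᶜ := by
    rw [card_compl]
    exact Nat.sub_le_sub_left (card_image_le.trans_eq card_univ) _
  have hhalf : ∀ i ∈ (univ.image S)ᶜ,
      2 * #{y : ι → Bool | g (y ∘ S) i ≠ y i} = 2 ^ Fintype.card ι := by
    intro i hi
    refine two_mul_card_filter_ne_apply_eq_two_pow (fun y => g (y ∘ S) i) i fun y b => ?_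
    have hsample : update y i b ∘ S = y ∘ S := funext fun k =>
      update_of_ne (fun hk : S k = i => mem_compl.1 hi (hk ▸ mem_image_of_mem S (mem_univ k))) _ _
    simp only [hsample]
  calc (Fintype.card ι - Fintype.card κ) * 2 ^ Fintype.card ι
      ≤ ∑ i ∈ (univ.image S)ᶜ, 2 * #{y : ι → Bool | g (y ∘ S) i ≠ y i} := by
        rw [sum_congr rfl hhalf, sum_const, smul_eq_mul]; gcongr
    _ ≤ ∑ i, 2 * #{y : ι → Bool | g (y ∘ S) i ≠ y i} :=
        sum_le_sum_of_subset (subset_univ _)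
    _ = 2 * ∑ y : ι → Bool, #{i | g (y ∘ S) i ≠ y i} := by
        rw [← mul_sum]
        exact congrArg (2 * ·) (sum_card_bipartiteAbove_eq_sum_card_bipartiteBelow _)

theorem exists_labelling_sub_card_mul_le_two_mul_sum_card_filter_ne [DecidableEq κ]
    (h : (κ → ι) → (κ → Bool) → ι → Bool) :
    ∃ y : ι → Bool, (Fintype.card ι - Fintype.card κ) * Fintype.card ι ^ Fintype.card κ ≤
      2 * ∑ S : κ → ι, #{i | h S (y ∘ S) i ≠ y i} := by
  suffices hsum : ∑ _y : ι → Bool, (Fintype.card ι - Fintype.card κ) *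
      Fintype.card ι ^ Fintype.card κ ≤
        ∑ y : ι → Bool, 2 * ∑ S : κ → ι, #{i | h S (y ∘ S) i ≠ y i} by
    obtain ⟨y, -, hy⟩ := exists_le_of_sum_le univ_nonempty hsum
    exact ⟨y, hy⟩
  calc ∑ _y : ι → Bool, (Fintype.card ι - Fintype.card κ) * Fintype.card ι ^ Fintype.card κ
      = ∑ _S : κ → ι, (Fintype.card ι - Fintype.card κ) * 2 ^ Fintype.card ι := by
        simp only [sum_const, card_univ, Fintype.card_fun, Fintype.card_bool, smul_eq_mul]; ring
    _ ≤ ∑ S : κ → ι, 2 * ∑ y : ι → Bool, #{i | h S (y ∘ S) i ≠ y i} :=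
        sum_le_sum fun S _ => sub_card_mul_two_pow_le_two_mul_sum_card_filter_ne S (h S)
    _ = ∑ y : ι → Bool, 2 * ∑ S : κ → ι, #{i | h S (y ∘ S) i ≠ y i} := by
        simp only [← mul_sum]; rw [sum_comm]

end

theorem no_free_lunch_core_general {X : Type*} (m : ℕ) (hm : 1 ≤ m)
    (x : Fin (2 * m) → X)
    (A : (Fin m → X × Bool) → X → Bool) :
    ∃ y : Fin (2 * m) → Bool,
      (1 : ℝ) / 8 ≤
        (∑ S : Fin m → Fin (2 * m),
          (Nat.card {i : Fin (2 * m) //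
              A (fun k => (x (S k), y (S k))) (x i) ≠ y i} : ℝ) / (2 * m)) /
          ((2 * m) ^ m : ℕ) := by
  obtain ⟨y, hy⟩ := exists_labelling_sub_card_mul_le_two_mul_sum_card_filter_ne
    fun (S : Fin m → Fin (2 * m)) ly i => A (fun k => (x (S k), ly k)) (x i)
  refine ⟨y, ?_⟩
  simp only [Fintype.card_fin, show 2 * m - m = m by omega] at hy
  simp only [Nat.card_eq_fintype_card, Fintype.card_subtype, ← sum_div, div_div]
  have hm' : (0 : ℝ) < m := by exact_mod_cast hm
  rw [le_div_iff₀ (by positivity)]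
  have hy' : (m : ℝ) * ((2 * m) ^ m : ℕ) ≤ 2 * ∑ S : Fin m → Fin (2 * m),
      (#{i | A (fun k => (x (S k), y (S k))) (x i) ≠ y i} : ℝ) := by exact_mod_cast hy
  have hnonneg : (0 : ℝ) ≤ m * ((2 * m) ^ m : ℕ) := by positivity
  linarith

/-- Combinatorial core of the no-free-lunch theorem: given `2m` distinct points
`x i` and a learner `A` mapping length-`m` labelled sequences to predictors, there
exists a labelling `y ∈ {0,1}^{2m}` (one of the `2^{2m}` labellings, i.e. one of the
distributions `D_j`) such that the average over all `(2m)^m` equally likely sample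
sequences `S` of the error `(1/2m) Σ_i 1[A(S)(x i) ≠ y i]` is at least `1/8`. -/
theorem no_free_lunch_core {X : Type*} (m : ℕ) (hm : 1 ≤ m)
    (x : Fin (2 * m) → X) (hx : Function.Injective x)
    (A : (Fin m → X × Bool) → X → Bool) :
    ∃ y : Fin (2 * m) → Bool,
      (1 : ℝ) / 8 ≤
        (∑ S : Fin m → Fin (2 * m),
          (Nat.card {i : Fin (2 * m) //
              A (fun k => (x (S k), y (S k))) (x i) ≠ y i} : ℝ) / (2 * m)) /
          ((2 * m) ^ m : ℕ) :=
  no_free_lunch_core_general m hm x A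
end

section
/- For the class H = {h_{i,j}} on ℕ×ℕ (h_{i,j}(x)=1 iff x=(i,k) with k ≤ j) and the perturbation type U with U((i,0)) = {(i,0)} ∪ {(i,k) : T_i does not halt within k steps on empty input} and U((i,j)) = {(i,j),(i,0)} if T_i does not halt within j steps else {(i,j)} (j > 0), the robust loss ℓ^U is computably evaluable on H: the function (i,j,x,y) ↦ ℓ^U(h_{i,j},x,y) is total computable. -/
open Nat.Partrec (Code)

/-- `T_i` halts within `k` steps on the empty input, for the standard enumeration of
Turing machines via `Nat.Partrec.Code` and its step-bounded evaluation `evaln`. -/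
def haltsWithin (i k : ℕ) : Prop :=
  (Nat.Partrec.Code.evaln k (Denumerable.ofNat Code i) 0).isSome = true

instance (i k : ℕ) : Decidable (haltsWithin i k) := by
  unfold haltsWithin; infer_instance

/-- The row-initial-segment hypothesis `h_{i,j}` on `ℕ × ℕ`:
`h_{i,j}(x) = 1` iff `x = (i,k)` with `k ≤ j`. -/
def hRow (i j : ℕ) (x : ℕ × ℕ) : Bool := decide (x.1 = i ∧ x.2 ≤ j)

/-- The step-counting perturbation type of Theorem 4.4:
`U((i,0)) = {(i,0)} ∪ {(i,k) : T_i does not halt within k steps}` and, for `j > 0`,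
`U((i,j)) = {(i,j),(i,0)}` if `T_i` does not halt within `j` steps, else `{(i,j)}`. -/
def Ustep : ℕ × ℕ → Set (ℕ × ℕ)
  | (i, 0) => {(i, 0)} ∪ {q | ∃ k, q = (i, k) ∧ ¬ haltsWithin i k}
  | (i, j + 1) =>
    if haltsWithin i (j + 1) then {(i, j + 1)} else {(i, j + 1), (i, 0)}

/-- The robust loss of hypothesis `f` on `(x,y)` with respect to `U`. -/
def RobLoss {α : Type*} (U : α → Set α) (f : α → Bool) (x : α) (y : Bool) : Prop :=
  ∃ z ∈ U x, f z ≠ y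

/-! Only finitely many steps of any `T_i` are ever needed. For `k > 0`, `U((a, k))` is one of two
explicit finite sets, chosen by running `T_a` for `k` steps. The set `U((a, 0))` is infinite, but
`h_{i,j}` is constant on row `a` beyond column `j` and not halting within `k` steps persists to
smaller `k`, so `U((a, 0))` contains a point misclassified by `h_{i,j}` iff `(a, 0)` or `(i, j + 1)`
is one; the latter asks whether `T_i` halts within `j + 1` steps. The resulting case distinction is
primitive recursive because `evaln` is. -/

theorem haltsWithin_mono {i k k' : ℕ} (h : k ≤ k') (hk : haltsWithin i k) :
    haltsWithin i k' := by
  obtain ⟨n, hn⟩ := Option.isSome_iff_exists.mp hk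
  exact Option.isSome_iff_exists.mpr ⟨n, Code.evaln_mono h hn⟩

theorem exists_lt_not_haltsWithin_iff {i j : ℕ} :
    (∃ k, j < k ∧ ¬haltsWithin i k) ↔ ¬haltsWithin i (j + 1) :=
  ⟨fun ⟨_, hjk, hk⟩ hj => hk (haltsWithin_mono hjk hj),
    fun hj => ⟨j + 1, j.lt_succ_self, hj⟩⟩

theorem primrecRel_haltsWithin : PrimrecRel haltsWithin :=
  Primrec₂.primrecRel <| (Primrec.option_isSome.comp <| Code.primrec_evaln.comp <|
    (Primrec.snd.pair ((Primrec.ofNat Code).comp Primrec.fst)).pair (Primrec.const 0)).of_eq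
      fun _ => Bool.decide_eq_true.symm

theorem Primrec.hRow {α : Type*} [Primcodable α] {f g : α → ℕ} {h : α → ℕ × ℕ}
    (hf : Primrec f) (hg : Primrec g) (hh : Primrec h) :
    Primrec fun a => _root_.hRow (f a) (g a) (h a) :=
  ((Primrec.eq.comp (fst.comp hh) hf).and (nat_le.comp (snd.comp hh) hg)).decide

theorem robLoss_Ustep_zero_iff (i j a : ℕ) (y : Bool) :
    RobLoss Ustep (hRow i j) (a, 0) y ↔
      hRow i j (a, 0) ≠ y ∨ (a = i ∧ y = true ∧ ¬haltsWithin i (j + 1)) := by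
  rw [← exists_lt_not_haltsWithin_iff]
  constructor
  · rintro ⟨z, rfl | ⟨k, rfl, hk⟩, hzy⟩
    · exact .inl hzy
    · by_cases h0 : hRow i j (a, 0) = y
      · obtain ⟨rfl, hjk⟩ : a = i ∧ j < k := by
          subst h0
          simp only [hRow, ne_eq, decide_eq_decide, zero_le, and_true] at hzy
          omega
        exact .inr ⟨rfl, by simp [← h0, hRow], k, hjk, hk⟩
      · exact .inl h0
  · rintro (h | ⟨rfl, rfl, k, hjk, hk⟩)
    · exact ⟨(a, 0), .inl rfl, h⟩
    · exact ⟨(a, k), .inr ⟨k, rfl, hk⟩, by simp [hRow, hjk]⟩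

theorem robLoss_Ustep_succ_iff (i j a k : ℕ) (y : Bool) :
    RobLoss Ustep (hRow i j) (a, k + 1) y ↔
      hRow i j (a, k + 1) ≠ y ∨ (¬haltsWithin a (k + 1) ∧ hRow i j (a, 0) ≠ y) := by
  simp only [RobLoss, Ustep]
  split_ifs with h <;> simp [h]

def UstepRobLossCriterion (i j : ℕ) (x : ℕ × ℕ) (y : Bool) : Prop :=
  hRow i j x ≠ y ∨
    (x.2 = 0 ∧ x.1 = i ∧ y = true ∧ ¬haltsWithin i (j + 1)) ∨
    (x.2 ≠ 0 ∧ ¬haltsWithin x.1 x.2 ∧ hRow i j (x.1, 0) ≠ y)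

theorem robLoss_Ustep_iff (i j : ℕ) (x : ℕ × ℕ) (y : Bool) :
    RobLoss Ustep (hRow i j) x y ↔ UstepRobLossCriterion i j x y := by
  obtain ⟨a, _ | k⟩ := x
  · simp [UstepRobLossCriterion, robLoss_Ustep_zero_iff]
  · simp [UstepRobLossCriterion, robLoss_Ustep_succ_iff]

open Primrec in
theorem primrecPred_ustepRobLossCriterion :
    PrimrecPred fun p : ℕ × ℕ × (ℕ × ℕ) × Bool =>
      UstepRobLossCriterion p.1 p.2.1 p.2.2.1 p.2.2.2 := by
  have hi : Primrec fun p : ℕ × ℕ × (ℕ × ℕ) × Bool => p.1 := fst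
  have hj : Primrec fun p : ℕ × ℕ × (ℕ × ℕ) × Bool => p.2.1 := fst.comp snd
  have hx : Primrec fun p : ℕ × ℕ × (ℕ × ℕ) × Bool => p.2.2.1 := fst.comp (snd.comp snd)
  have hy : Primrec fun p : ℕ × ℕ × (ℕ × ℕ) × Bool => p.2.2.2 := snd.comp (snd.comp snd)
  have ha := fst.comp hx
  have hk := snd.comp hx
  have hk0 := Primrec.eq.comp hk (const 0)
  exact (Primrec.eq.comp (Primrec.hRow hi hj hx) hy).not.or <|
    (hk0.and <| (Primrec.eq.comp ha hi).and <| (Primrec.eq.comp hy (const true)).and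
      (primrecRel_haltsWithin.comp hi (nat_add.comp hj (const 1))).not).or
    (hk0.not.and <| (primrecRel_haltsWithin.comp ha hk).not.and
      (Primrec.eq.comp (Primrec.hRow hi hj (ha.pair (const 0))) hy).not)

/-- For the class `H = {h_{i,j}}` and the step-counting perturbation type `U`,
the robust loss `ℓ^U` is computably evaluable on `H`: the function
`(i,j,x,y) ↦ ℓ^U(h_{i,j},x,y)` is total computable. -/
theorem robust_loss_computably_evaluable :
    ∃ L : ℕ × ℕ × (ℕ × ℕ) × Bool → Bool, Computable L ∧
      ∀ (i j : ℕ) (x : ℕ × ℕ) (y : Bool),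
        L (i, j, x, y) = true ↔ RobLoss Ustep (hRow i j) x y := by
  classical
  exact ⟨_, primrecPred_ustepRobLossCriterion.decide.to_comp, fun i j x y => by
    rw [decide_eq_true_iff, robLoss_Ustep_iff]⟩
end

section
/- For the construction of Theorem 4.4 (class H = {h_{i,j}} of row-initial-segments on ℕ×ℕ and the step-counting perturbation type U), there is no computable strong-realizable robust ERM oracle for (H,U): no total computable procedure can, on every robustly realizable sample output h ∈ H with zero empirical robust risk, and on every robustly non-realizable sample halt and report non-realizability. In fact, deciding whether the single-point sample {((i,0),1)} is robustly realizable by H is equivalent to deciding whether T_i halts on the empty input. -/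
/-!
If `T_i` halts within `k` steps, then `U((i,0))` lies in the segment `{(i,m) | m ≤ k}`, so
`h_{i,k}` robustly labels `(i,0)` with `1`; if `T_i` never halts, `U((i,0))` is the whole
row `i`, which no initial segment covers. Hence a strong-realizable robust ERM oracle, run on
the single-point samples `{((i,0),1)}`, would decide the halting problem.
-/

open Nat.Partrec (Code)

theorem exists_haltsWithin_encode_iff (c : Code) :
    (∃ k, haltsWithin (Encodable.encode c) k) ↔ (c.eval 0).Dom := by
  simp only [haltsWithin, Denumerable.ofNat_encode, Option.isSome_iff_exists, Part.dom_iff_mem,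
    Nat.Partrec.Code.evaln_complete]
  exact exists_comm

theorem mem_Ustep_zero_of_not_haltsWithin {i k : ℕ} (hk : ¬ haltsWithin i k) :
    (i, k) ∈ Ustep (i, 0) :=
  Or.inr ⟨k, rfl, hk⟩

theorem hRow_eq_true_of_mem_Ustep_zero {i k : ℕ} (hk : haltsWithin i k) {z : ℕ × ℕ}
    (hz : z ∈ Ustep (i, 0)) : hRow i k z = true := by
  rcases hz with rfl | ⟨m, rfl, hm⟩
  · simp [hRow]
  · have hmk : m ≤ k := by
      by_contra hkm
      exact hm (haltsWithin_mono (le_of_not_ge hkm) hk)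
    simp [hRow, hmk]

theorem exists_not_robLoss_hRow_iff (i : ℕ) :
    (∃ a b : ℕ, ¬ RobLoss Ustep (hRow a b) (i, 0) true) ↔ ∃ k, haltsWithin i k := by
  constructor
  · rintro ⟨a, b, hloss⟩
    by_contra! hnever
    exact hloss ⟨(i, b + 1), mem_Ustep_zero_of_not_haltsWithin (hnever _), by simp [hRow]⟩
  · rintro ⟨k, hk⟩
    exact ⟨i, k, fun ⟨_, hz, hne⟩ => hne (hRow_eq_true_of_mem_Ustep_zero hk hz)⟩

theorem ComputablePred.of_isSome_iff {α β : Type*} [Primcodable α] [Primcodable β]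
    {F : α → Option β} (hF : Computable F) {p : α → Prop} (h : ∀ a, (F a).isSome ↔ p a) :
    ComputablePred p :=
  ComputablePred.computable_iff.2
    ⟨_, Primrec.option_isSome.to_comp.comp hF, funext fun a => propext (h a).symm⟩

/-- For the construction of Theorem 4.4, there is no computable strong-realizable
robust ERM oracle for `(H,U)`: no total computable procedure that, on every robustly
realizable sample, outputs (the index `(a,b)` of) a hypothesis `h_{a,b} ∈ H` with
zero empirical robust risk, and on every robustly non-realizable sample halts and
reports non-realizability (`none`). In fact, the single-point sample `{((i,0),1)}`
is robustly realizable by `H` if and only if `T_i` halts on the empty input. -/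
theorem no_strong_realizable_RERM :
    (¬ ∃ F : List ((ℕ × ℕ) × Bool) → Option (ℕ × ℕ), Computable F ∧
      ∀ S : List ((ℕ × ℕ) × Bool),
        ((∃ a b : ℕ, ∀ p ∈ S, ¬ RobLoss Ustep (hRow a b) p.1 p.2) →
          ∃ a b : ℕ, F S = some (a, b) ∧ ∀ p ∈ S, ¬ RobLoss Ustep (hRow a b) p.1 p.2) ∧
        ((¬ ∃ a b : ℕ, ∀ p ∈ S, ¬ RobLoss Ustep (hRow a b) p.1 p.2) → F S = none)) ∧
    (∀ i : ℕ,
      (∃ a b : ℕ, ¬ RobLoss Ustep (hRow a b) (i, 0) true) ↔ ∃ k, haltsWithin i k) := by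
  refine ⟨?_, exists_not_robLoss_hRow_iff⟩
  rintro ⟨F, hF, hspec⟩
  let sample : Code → List ((ℕ × ℕ) × Bool) := fun c => [((Encodable.encode c, 0), true)]
  have hsample : Computable sample :=
    Computable.list_cons.comp
      ((Computable.encode.pair (Computable.const 0)).pair (Computable.const true))
      (Computable.const [])
  have hdecides : ∀ c, (F (sample c)).isSome ↔ (c.eval 0).Dom := by
    intro c
    rw [← exists_haltsWithin_encode_iff, ← exists_not_robLoss_hRow_iff]
    obtain ⟨hrealizable, hnot_realizable⟩ := hspec (sample c)
    simp only [sample, List.forall_mem_singleton] at hrealizable hnot_realizable ⊢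
    constructor
    · intro hsome
      by_contra hno
      simp [hnot_realizable hno] at hsome
    · intro hyes
      obtain ⟨a, b, hFS, -⟩ := hrealizable hyes
      simp [hFS]
  exact ComputablePred.halting_problem 0 (.of_isSome_iff (hF.comp hsample) hdecides)
end

section
/- If the Halting problem is undecidable, then for the construction of Theorem 4.4, the class H is not properly agnostically U-robustly CPAC learnable: any computable proper learner A with a sample-size bound m for accuracy ε = 1/8 and confidence δ = 1/8, run on the single possible sample of size m from the point-mass distribution D_i on ((i,0),1), would yield a decision procedure for whether T_i halts on the empty input. -/
/-!
On `D_i` the best hypothesis in `H` has robust risk `0` when `T_i` halts (take `h_{i,k}` with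
`k` at least the halting time) and all risks lie in `{0, 1}`. So an `ε = 1/8` agnostic learner
must output some `h_{a,b}` of risk `0` whenever `T_i` halts, i.e. `a = i` and `T_i` halts within
`b + 1` steps, a condition that a computable learner lets us check by simulation. Conversely
that check can only succeed if `T_i` halts, so halting would be decidable.
-/

open Nat.Partrec (Code)

open Classical in
/-- The robust risk of `h_{a,b}` under the point-mass distribution `D_i` on
`((i,0),1)`: it is `1` if the robust loss on that point is incurred and `0`
otherwise. -/
noncomputable def riskD (i a b : ℕ) : ℝ :=
  if RobLoss Ustep (hRow a b) (i, 0) true then 1 else 0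

theorem Primrec.list_replicate_const {α : Type*} [Primcodable α] (n : ℕ) :
    Primrec fun a : α => List.replicate n a := by
  induction n with
  | zero => exact Primrec.const []
  | succ n ih => exact Primrec.list_cons.comp Primrec.id ih

theorem primrec₂_decide_haltsWithin : Primrec₂ fun i k => decide (haltsWithin i k) := by
  have hev : Primrec₂ fun i k => Nat.Partrec.Code.evaln k (Denumerable.ofNat Code i) 0 :=
    Nat.Partrec.Code.primrec_evaln.comp
      ((Primrec.snd.pair ((Primrec.ofNat Code).comp Primrec.fst)).pair (Primrec.const 0))
  exact (Primrec.option_isSome.comp₂ hev).of_eq fun i k => by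
    rw [Bool.eq_iff_iff, decide_eq_true_iff]; rfl

/-- The perturbations of `(i,0)` are the points of row `i` strictly before the halting time
of `T_i` (all of row `i` if it never halts). -/
theorem robLoss_Ustep_hRow_iff {i a b : ℕ} :
    RobLoss Ustep (hRow a b) (i, 0) true ↔ ¬(a = i ∧ haltsWithin i (b + 1)) := by
  constructor
  · rintro ⟨z, hz, hne⟩ ⟨rfl, hH⟩
    rcases hz with rfl | ⟨k, rfl, hk⟩
    · simp [hRow] at hne
    · have hkb : k ≤ b := by
        by_contra hkb
        exact hk (haltsWithin_mono (by omega) hH)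
      simp [hRow, hkb] at hne
  · intro h
    by_cases hai : a = i
    · subst hai
      exact ⟨(a, b + 1), Or.inr ⟨b + 1, rfl, fun hH => h ⟨rfl, hH⟩⟩, by simp [hRow]⟩
    · exact ⟨(i, 0), Or.inl rfl, by simp [hRow, Ne.symm hai]⟩

theorem riskD_nonneg (i a b : ℕ) : 0 ≤ riskD i a b := by
  unfold riskD; split <;> norm_num

theorem riskD_eq_ite (i a b : ℕ) :
    riskD i a b = if a = i ∧ haltsWithin i (b + 1) then 0 else 1 := by
  rw [riskD, robLoss_Ustep_hRow_iff]
  split_ifs <;> tauto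

theorem riskD_le_one_div_eight_iff {i a b : ℕ} :
    riskD i a b ≤ 1 / 8 ↔ a = i ∧ haltsWithin i (b + 1) := by
  rw [riskD_eq_ite]
  split_ifs with h <;> norm_num [h]

theorem sInf_riskD_eq_zero {i : ℕ} (h : ∃ k, haltsWithin i k) :
    sInf {r : ℝ | ∃ a b : ℕ, r = riskD i a b} = 0 := by
  obtain ⟨k, hk⟩ := h
  refine IsLeast.csInf_eq ⟨⟨i, k, ?_⟩, ?_⟩
  · rw [riskD_eq_ite, if_pos ⟨rfl, haltsWithin_mono k.le_succ hk⟩]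
  · rintro r ⟨a, b, rfl⟩
    exact riskD_nonneg i a b

/-- If the Halting problem is undecidable, then for the construction of Theorem 4.4
the class `H = {h_{a,b}}` is not properly agnostically `U`-robustly CPAC learnable:
there is no computable proper learner `A` with a sample-size bound `M` for accuracy
`ε = 1/8` and confidence `δ = 1/8` on the point-mass distributions `D_i` — for which
the unique size-`M` sample is `((i,0),1)` repeated `M` times, so the `(1/8,1/8)`
agnostic guarantee forces the output's robust risk on `D_i` to be within `1/8` of
`inf_{h ∈ H} R_U(h; D_i)` — since such a learner would decide halting. -/
theorem not_properly_agnostically_robustly_CPAC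
    (hHalt : ¬ ∃ d : ℕ → Bool, Computable d ∧
      ∀ i, d i = true ↔ ∃ k, haltsWithin i k) :
    ¬ ∃ (A : List ((ℕ × ℕ) × Bool) → ℕ × ℕ) (M : ℕ), Computable A ∧
      ∀ i : ℕ,
        riskD i (A (List.replicate M ((i, 0), true))).1
            (A (List.replicate M ((i, 0), true))).2 ≤
          sInf {r : ℝ | ∃ a b : ℕ, r = riskD i a b} + 1 / 8 := by
  rintro ⟨A, M, hA, hguar⟩
  set out : ℕ → ℕ × ℕ := fun i => A (List.replicate M ((i, 0), true))
  have hout : Computable out :=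
    hA.comp ((Primrec.list_replicate_const M).comp
      ((Primrec.id.pair (Primrec.const 0)).pair (Primrec.const true))).to_comp
  refine hHalt
    ⟨fun i => decide ((out i).1 = i) && decide (haltsWithin i ((out i).2 + 1)), ?_, ?_⟩
  · exact Primrec.and.to_comp.comp
      (Primrec.eq.decide.to_comp.comp (Computable.fst.comp hout) .id)
      (primrec₂_decide_haltsWithin.to_comp.comp .id
        (Computable.succ.comp (Computable.snd.comp hout)))
  · intro i
    simp only [Bool.and_eq_true, decide_eq_true_eq]
    refine ⟨fun hi => ⟨_, hi.2⟩, fun hi => riskD_le_one_div_eight_iff.mp ?_⟩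
    simpa [sInf_riskD_eq_zero hi] using hguar i
end

section
/- For the class H = {h_a} of even-thresholds-with-odd-constant-one on ℕ and the proof-system perturbation type of Theorem 4.1, the margin class H_mar^U has VC dimension exactly 1. -/
/-- A family `G` of subsets of `X` shatters a finite set `S` if every subset of `S`
is cut out by some member of `G`. -/
def ShattersFam {X : Type*} (G : Set (Set X)) (S : Finset X) : Prop :=
  ∀ Y ⊆ S, ∃ g ∈ G, ∀ x ∈ S, x ∈ g ↔ x ∈ Y

/-- The proof-system perturbation type of Theorem 4.1, parametrized by the relation
`Proves j i` = "the `j`-th proof proves the `i`-th formula":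
`U(6i) = {6i} ∪ {odd numbers}`, `U(6i+2) = {6i+2}`,
`U(6i+4) = {6i+2, 6i+4} ∪ {2j+1 : π_j proves φ_i}`, `U(odd) = {odd}`. -/
def Uproof (Proves : ℕ → ℕ → Prop) (n : ℕ) : Set ℕ :=
  if n % 2 = 1 then {n}
  else if n % 6 = 0 then {n} ∪ {m | m % 2 = 1}
  else if n % 6 = 2 then {n}
  else {n - 2, n} ∪ {m | ∃ j, m = 2 * j + 1 ∧ Proves j ((n - 4) / 6)}

/-- The margin set of `h` with respect to perturbation type `U`:
points admitting a perturbation labelled differently by `h`. -/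
def marginSet {α : Type*} (U : α → Set α) (h : α → Bool) : Set α :=
  {x | ∃ z ∈ U x, h x ≠ h z}

namespace MarAux

abbrev c (a : ℕ∞) (i : ℕ) : Prop := (i : ℕ∞) ≤ a

lemma cmon {a : ℕ∞} {i j : ℕ} (hij : i ≤ j) (h : c a j) : c a i :=
  le_trans (Nat.cast_le.mpr hij) h

lemma ltc {a : ℕ∞} {i j : ℕ} (h1 : ¬ c a i) (h2 : c a j) : j < i := by
  by_contra h
  push_neg at h
  exact h1 (cmon h h2)

variable {Proves : ℕ → ℕ → Prop} {a : ℕ∞} {h : ℕ → Bool}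

def Spec (a : ℕ∞) (h : ℕ → Bool) : Prop :=
  ∀ i : ℕ, h (2 * i) = decide ((i : ℕ∞) ≤ a) ∧ h (2 * i + 1) = true

lemma h_odd (Hh : Spec a h) {n : ℕ} (hn : n % 2 = 1) : h n = true := by
  have e : n = 2 * (n / 2) + 1 := by omega
  rw [e]
  exact (Hh (n / 2)).2

lemma mar_odd {n : ℕ} (hn : n % 2 = 1) : n ∉ marginSet (Uproof Proves) h := by
  rintro ⟨z, hz, hne⟩
  rw [Uproof, if_pos hn] at hz
  simp only [Set.mem_singleton_iff] at hz
  subst hz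
  exact hne rfl

lemma mar2 {n : ℕ} (hn : n % 6 = 2) : n ∉ marginSet (Uproof Proves) h := by
  rintro ⟨z, hz, hne⟩
  rw [Uproof, if_neg (by omega), if_neg (by omega), if_pos hn] at hz
  simp only [Set.mem_singleton_iff] at hz
  subst hz
  exact hne rfl

lemma mar0 (Hh : Spec a h) (i : ℕ) :
    (6 * i) ∈ marginSet (Uproof Proves) h ↔ ¬ c a (3 * i) := by
  have hU : Uproof Proves (6 * i) = {6 * i} ∪ {m | m % 2 = 1} := by
    rw [Uproof, if_neg (by omega), if_pos (by omega)]
  have hval : h (6 * i) = decide (c a (3 * i)) := by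
    have e := (Hh (3 * i)).1
    rwa [show 2 * (3 * i) = 6 * i by ring] at e
  constructor
  · rintro ⟨z, hz, hne⟩
    rw [hU] at hz
    rcases hz with hz | hz
    · simp only [Set.mem_singleton_iff] at hz
      subst hz
      exact absurd rfl hne
    · have hzv : h z = true := h_odd Hh hz
      rw [hval, hzv] at hne
      simpa using hne
  · intro hc
    refine ⟨1, ?_, ?_⟩
    · rw [hU]; right; exact (by norm_num : (1 : ℕ) % 2 = 1)
    · rw [hval, h_odd Hh (by norm_num : (1 : ℕ) % 2 = 1)]
      simpa using hc

lemma mar4 (Hh : Spec a h) (i : ℕ) :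
    (6 * i + 4) ∈ marginSet (Uproof Proves) h ↔
      ¬ c a (3 * i + 2) ∧ (c a (3 * i + 1) ∨ ∃ j, Proves j i) := by
  have hU : Uproof Proves (6 * i + 4)
      = {6 * i + 2, 6 * i + 4} ∪ {m | ∃ j, m = 2 * j + 1 ∧ Proves j i} := by
    rw [Uproof, if_neg (by omega), if_neg (by omega), if_neg (by omega)]
    have e1 : 6 * i + 4 - 2 = 6 * i + 2 := by omega
    have e2 : (6 * i + 4 - 4) / 6 = i := by omega
    rw [e1, e2]
  have hx : h (6 * i + 4) = decide (c a (3 * i + 2)) := by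
    have e := (Hh (3 * i + 2)).1
    rwa [show 2 * (3 * i + 2) = 6 * i + 4 by ring] at e
  have hm : h (6 * i + 2) = decide (c a (3 * i + 1)) := by
    have e := (Hh (3 * i + 1)).1
    rwa [show 2 * (3 * i + 1) = 6 * i + 2 by ring] at e
  have himp : c a (3 * i + 2) → c a (3 * i + 1) := cmon (by omega)
  constructor
  · rintro ⟨z, hz, hne⟩
    rw [hU] at hz
    rcases hz with (hz | hz) | ⟨j, hzj, hPj⟩
    · subst hz
      rw [hx, hm] at hne
      have hni : ¬ (c a (3 * i + 2) ↔ c a (3 * i + 1)) := by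
        simpa [decide_eq_decide] using hne
      have h2 : ¬ c a (3 * i + 2) := fun hc => hni ⟨fun _ => himp hc, fun _ => hc⟩
      exact ⟨h2, Or.inl (by tauto)⟩
    · subst hz
      exact absurd rfl hne
    · subst hzj
      have hzv : h (2 * j + 1) = true := (Hh j).2
      rw [hx, hzv] at hne
      exact ⟨by simpa using hne, Or.inr ⟨j, hPj⟩⟩
  · rintro ⟨h2, h1 | ⟨j, hj⟩⟩
    · refine ⟨6 * i + 2, by rw [hU]; left; left; rfl, ?_⟩
      rw [hx, hm]
      simp only [ne_eq, decide_eq_decide]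
      tauto
    · refine ⟨2 * j + 1, by rw [hU]; right; exact ⟨j, rfl, hj⟩, ?_⟩
      rw [hx, (Hh j).2]
      simpa using h2

lemma mar_mod {n : ℕ} (hm : n ∈ marginSet (Uproof Proves) h) :
    n % 6 = 0 ∨ n % 6 = 4 := by
  by_contra hc
  push_neg at hc
  by_cases hp : n % 2 = 1
  · exact mar_odd hp hm
  · exact mar2 (by omega) hm

lemma case00 (a b : ℕ∞) (i i' : ℕ) (h1 : ¬ c a (3 * i)) (h2 : c a (3 * i'))
    (h3 : c b (3 * i)) (h4 : ¬ c b (3 * i')) : False := by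
  have e1 := ltc h1 h2
  have e2 := ltc h4 h3
  omega

lemma case04 (P : Prop) (i i' : ℕ)
    (A1 : ∃ a, ¬ c a (3 * i) ∧ ¬ (¬ c a (3 * i' + 2) ∧ (c a (3 * i' + 1) ∨ P)))
    (A2 : ∃ b, c b (3 * i) ∧ (¬ c b (3 * i' + 2) ∧ (c b (3 * i' + 1) ∨ P)))
    (A3 : ∃ d, ¬ c d (3 * i) ∧ (¬ c d (3 * i' + 2) ∧ (c d (3 * i' + 1) ∨ P))) :
    False := by
  obtain ⟨b, hb1, hb2, _⟩ := A2
  have hle : 3 * i < 3 * i' + 2 := ltc hb2 hb1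
  by_cases hP : P
  · obtain ⟨a, ha1, ha2⟩ := A1
    have hca : c a (3 * i' + 2) := by
      by_contra hno
      exact ha2 ⟨hno, Or.inr hP⟩
    have := ltc ha1 hca
    omega
  · obtain ⟨d, hd1, hd2, hd3⟩ := A3
    have hcd : c d (3 * i' + 1) := hd3.resolve_right hP
    have := ltc hd1 hcd
    omega

lemma case44 (P P' : Prop) (i i' : ℕ) (hii : i < i')
    (A1 : ∃ a, (¬ c a (3 * i + 2) ∧ (c a (3 * i + 1) ∨ P)) ∧
      ¬ (¬ c a (3 * i' + 2) ∧ (c a (3 * i' + 1) ∨ P')))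
    (A3 : ∃ d, (¬ c d (3 * i + 2) ∧ (c d (3 * i + 1) ∨ P)) ∧
      (¬ c d (3 * i' + 2) ∧ (c d (3 * i' + 1) ∨ P'))) : False := by
  by_cases hP' : P'
  · obtain ⟨a, ⟨ha1, _⟩, ha2⟩ := A1
    have hca : c a (3 * i' + 2) := by
      by_contra hno
      exact ha2 ⟨hno, Or.inr hP'⟩
    have := ltc ha1 hca
    omega
  · obtain ⟨d, ⟨hd1, _⟩, hd2, hd3⟩ := A3
    have hcd : c d (3 * i' + 1) := hd3.resolve_right hP'
    have := ltc hd1 hcd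
    omega

lemma no_two (Proves : ℕ → ℕ → Prop) (S : Finset ℕ)
    (hS : ShattersFam (marginSet (Uproof Proves) '' Hthr) S)
    {x y : ℕ} (hx : x ∈ S) (hy : y ∈ S) (hxy : x ≠ y) : False := by
  have get : ∀ Y : Finset ℕ, Y ⊆ S → ∃ (a : ℕ∞) (h : ℕ → Bool), Spec a h ∧
      (x ∈ marginSet (Uproof Proves) h ↔ x ∈ Y) ∧
      (y ∈ marginSet (Uproof Proves) h ↔ y ∈ Y) := by
    intro Y hY
    obtain ⟨g, ⟨h, ha, rfl⟩, hg⟩ := hS Y hY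
    obtain ⟨a, Hh⟩ := ha
    exact ⟨a, h, Hh, hg x hx, hg y hy⟩
  obtain ⟨a1, h1, H1, hx1, hy1⟩ := get {x} (by simpa using hx)
  obtain ⟨a2, h2, H2, hx2, hy2⟩ := get {y} (by simpa using hy)
  obtain ⟨a3, h3, H3, hx3, hy3⟩ := get {x, y}
    (by rw [Finset.insert_subset_iff]; exact ⟨hx, by simpa using hy⟩)
  have hx1' : x ∈ marginSet (Uproof Proves) h1 := hx1.mpr (by simp)
  have hy1' : y ∉ marginSet (Uproof Proves) h1 := by
    intro hm
    have e : y = x := by simpa using hy1.mp hm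
    exact hxy e.symm
  have hx2' : x ∉ marginSet (Uproof Proves) h2 := fun hm => hxy (by simpa using hx2.mp hm)
  have hy2' : y ∈ marginSet (Uproof Proves) h2 := hy2.mpr (by simp)
  have hx3' : x ∈ marginSet (Uproof Proves) h3 := hx3.mpr (by simp)
  have hy3' : y ∈ marginSet (Uproof Proves) h3 := hy3.mpr (by simp)
  rcases mar_mod hx1' with hxm | hxm <;> rcases mar_mod hy2' with hym | hym
  · -- x = 6i, y = 6i'
    obtain ⟨i, rfl⟩ : ∃ i, x = 6 * i := ⟨x / 6, by omega⟩
    obtain ⟨i', rfl⟩ : ∃ i', y = 6 * i' := ⟨y / 6, by omega⟩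
    exact case00 a1 a2 i i' ((mar0 H1 i).mp hx1')
      (not_not.mp (fun hc => hy1' ((mar0 H1 i').mpr hc)))
      (not_not.mp (fun hc => hx2' ((mar0 H2 i).mpr hc)))
      ((mar0 H2 i').mp hy2')
  · -- x = 6i, y = 6i'+4
    obtain ⟨i, rfl⟩ : ∃ i, x = 6 * i := ⟨x / 6, by omega⟩
    obtain ⟨i', rfl⟩ : ∃ i', y = 6 * i' + 4 := ⟨y / 6, by omega⟩
    exact case04 (∃ j, Proves j i') i i'
      ⟨a1, (mar0 H1 i).mp hx1', fun hc => hy1' ((mar4 H1 i').mpr hc)⟩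
      ⟨a2, not_not.mp (fun hc => hx2' ((mar0 H2 i).mpr hc)), (mar4 H2 i').mp hy2'⟩
      ⟨a3, (mar0 H3 i).mp hx3', (mar4 H3 i').mp hy3'⟩
  · -- x = 6i+4, y = 6i'
    obtain ⟨i, rfl⟩ : ∃ i, x = 6 * i + 4 := ⟨x / 6, by omega⟩
    obtain ⟨i', rfl⟩ : ∃ i', y = 6 * i' := ⟨y / 6, by omega⟩
    exact case04 (∃ j, Proves j i) i' i
      ⟨a2, (mar0 H2 i').mp hy2', fun hc => hx2' ((mar4 H2 i).mpr hc)⟩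
      ⟨a1, not_not.mp (fun hc => hy1' ((mar0 H1 i').mpr hc)), (mar4 H1 i).mp hx1'⟩
      ⟨a3, (mar0 H3 i').mp hy3', (mar4 H3 i).mp hx3'⟩
  · -- x = 6i+4, y = 6i'+4
    obtain ⟨i, rfl⟩ : ∃ i, x = 6 * i + 4 := ⟨x / 6, by omega⟩
    obtain ⟨i', rfl⟩ : ∃ i', y = 6 * i' + 4 := ⟨y / 6, by omega⟩
    have hne : i ≠ i' := fun e => hxy (by rw [e])
    rcases lt_or_gt_of_ne hne with hlt | hgt
    · exact case44 (∃ j, Proves j i) (∃ j, Proves j i') i i' hlt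
        ⟨a1, (mar4 H1 i).mp hx1', fun hc => hy1' ((mar4 H1 i').mpr hc)⟩
        ⟨a3, (mar4 H3 i).mp hx3', (mar4 H3 i').mp hy3'⟩
    · exact case44 (∃ j, Proves j i') (∃ j, Proves j i) i' i hgt
        ⟨a2, (mar4 H2 i').mp hy2', fun hc => hx2' ((mar4 H2 i).mpr hc)⟩
        ⟨a3, (mar4 H3 i').mp hy3', (mar4 H3 i).mp hx3'⟩

def hA (a : ℕ∞) : ℕ → Bool :=
  fun n => if n % 2 = 1 then true else decide (((n / 2 : ℕ) : ℕ∞) ≤ a)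

lemma hA_spec (a : ℕ∞) : Spec a (hA a) := by
  intro i
  constructor
  · rw [hA]
    rw [if_neg (by omega)]
    have e : 2 * i / 2 = i := by omega
    rw [e]
  · rw [hA, if_pos (by omega)]

lemma hA_mem (a : ℕ∞) : hA a ∈ Hthr := ⟨a, hA_spec a⟩

lemma mar_top (Proves : ℕ → ℕ → Prop) :
    marginSet (Uproof Proves) (hA ⊤) = ∅ := by
  have hall : ∀ m, hA ⊤ m = true := by
    intro m
    rw [hA]
    split
    · rfl
    · simp
  ext n
  simp only [Set.mem_empty_iff_false, iff_false]
  rintro ⟨z, hz, hne⟩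
  rw [hall, hall] at hne
  exact hne rfl

end MarAux

open MarAux in
/-- For the threshold class `H` of Theorem 4.1 and its proof-system perturbation
type `U` (assuming each proof proves at most one formula), the margin class
`H_mar^U = {mar_h^U : h ∈ H}` has VC dimension exactly 1. -/
theorem margin_class_vc_eq_one (Proves : ℕ → ℕ → Prop)
    (hProves : ∀ j i i', Proves j i → Proves j i' → i = i') :
    (∃ S : Finset ℕ, S.card = 1 ∧
      ShattersFam (marginSet (Uproof Proves) '' Hthr) S) ∧
    (∀ S : Finset ℕ, ShattersFam (marginSet (Uproof Proves) '' Hthr) S →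
      S.card ≤ 1) := by
  constructor
  · refine ⟨{6}, by simp, ?_⟩
    intro Y hY
    by_cases h6 : 6 ∈ Y
    · refine ⟨marginSet (Uproof Proves) (hA 0), ⟨hA 0, hA_mem 0, rfl⟩, ?_⟩
      intro z hz
      simp only [Finset.mem_singleton] at hz
      subst hz
      simp only [h6, iff_true]
      have h1 : ¬ c 0 (3 * 1) := by
        intro hle
        simp at hle
      have := ((mar0 (Proves := Proves) (hA_spec 0) 1).mpr h1)
      norm_num at this
      exact this
    · refine ⟨marginSet (Uproof Proves) (hA ⊤), ⟨hA ⊤, hA_mem ⊤, rfl⟩, ?_⟩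
      intro z hz
      simp only [Finset.mem_singleton] at hz
      subst hz
      rw [mar_top]
      simp [h6]
  · intro S hS
    by_contra hcard
    push_neg at hcard
    obtain ⟨x, hx, y, hy, hxy⟩ := Finset.one_lt_card.mp hcard
    exact no_two Proves S hS hx hy hxy
end
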